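/- arXiv:1709.04066 — 7 statements merged into one kernel-verified Lean document; each statement's English description precedes it below -/
import Mathlib

section
/- Let X be the presentation 2-complex of the group G_{m,k} built from unit euclidean squares. The link of the unique vertex of X is a simple graph with 2(m+k+1) vertices {a_i^+, a_i^-} in which, for each relation, edges join a^±-vertices as specified, and this graph contains no cycles of length less than 4; hence X satisfies the Gromov link condition and is non-positively curved. -/
/-- One edge class of the link of the unique vertex of the presentation
2-complex of `G_{m,k}`.  The vertex set is `Fin (m+k+1) × Bool`, where
`(i, true)` stands for `a_{i+1}^+` and `(i, false)` for `a_{i+1}^-`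
(0-based indexing of the generators `a_1, …, a_{m+k+1}`).

The commutation relations `[a_i, a_{i+1}] = 1` (1 ≤ i ≤ m) contribute all four
edges between the pair `a_i^±` and `a_{i+1}^±`, and the relations
`a_{m+j+1}⁻¹ a_j a_{m+j+1} = a_{m+j}` (1 ≤ j ≤ k) contribute the edges
`a_j^± — a_{m+j+1}^-` and `a_{m+j}^± — a_{m+j+1}^+`. -/
def linkAdjOneWay (m k : ℕ) (u v : Fin (m + k + 1) × Bool) : Prop :=
  ((v.1 : ℕ) = (u.1 : ℕ) + 1 ∧ (v.1 : ℕ) ≤ m) ∨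
  (∃ ℓ < k, (u.1 : ℕ) = ℓ ∧ (v.1 : ℕ) = m + ℓ + 1 ∧ v.2 = false) ∨
  (∃ ℓ < k, (u.1 : ℕ) = m + ℓ ∧ (v.1 : ℕ) = m + ℓ + 1 ∧ v.2 = true)

/-- The link of the unique vertex of the presentation 2-complex of `G_{m,k}`,
as a simple graph on the `2(m+k+1)` vertices `a_i^±`. -/
def linkGraph (m k : ℕ) : SimpleGraph (Fin (m + k + 1) × Bool) where
  Adj u v := linkAdjOneWay m k u v ∨ linkAdjOneWay m k v u
  symm := ⟨fun _ _ h => Or.symm h⟩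
  loopless := by
    refine ⟨?_⟩
    intro u h
    rcases h with h | h <;>
      rcases h with ⟨h1, _⟩ | ⟨ℓ, _, h1, h2, _⟩ | ⟨ℓ, _, h1, h2, _⟩ <;> omega


lemma no_triangle (m k : ℕ) (hm : 1 ≤ m) (hk : k ≤ m)
    (x y z : Fin (m + k + 1) × Bool)
    (hxy : (linkGraph m k).Adj x y) (hyz : (linkGraph m k).Adj y z)
    (hzx : (linkGraph m k).Adj z x) : False := by
  simp only [linkGraph, linkAdjOneWay] at hxy hyz hzx
  rcases hxy with (⟨a1,a2⟩|⟨l1,hl1,a1,a2,a3⟩|⟨l1,hl1,a1,a2,a3⟩)|(⟨a1,a2⟩|⟨l1,hl1,a1,a2,a3⟩|⟨l1,hl1,a1,a2,a3⟩) <;>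
  rcases hyz with (⟨b1,b2⟩|⟨l2,hl2,b1,b2,b3⟩|⟨l2,hl2,b1,b2,b3⟩)|(⟨b1,b2⟩|⟨l2,hl2,b1,b2,b3⟩|⟨l2,hl2,b1,b2,b3⟩) <;>
  rcases hzx with (⟨c1,c2⟩|⟨l3,hl3,c1,c2,c3⟩|⟨l3,hl3,c1,c2,c3⟩)|(⟨c1,c2⟩|⟨l3,hl3,c1,c2,c3⟩|⟨l3,hl3,c1,c2,c3⟩) <;>
  first | omega | simp_all

/-- The link of the unique vertex of the presentation 2-complex of `G_{m,k}`
contains no cycles of length less than 4 (girth ≥ 4); hence the squared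
presentation complex satisfies the Gromov link condition and is non-positively
curved. -/
theorem linkGraph_no_short_cycles (m k : ℕ) (hm : 1 ≤ m) (hk : k ≤ m)
    (v : Fin (m + k + 1) × Bool) (p : (linkGraph m k).Walk v v)
    (hp : p.IsCycle) : 4 ≤ p.length := by
  have h3 := hp.three_le_length
  by_contra h4
  have hlen : p.length = 3 := by omega
  cases p with
  | nil => simp at hlen
  | cons e1 q =>
    cases q with
    | nil => simp at hlen
    | cons e2 q2 =>
      cases q2 with
      | nil => simp at hlen
      | cons e3 q3 =>
        cases q3 with
        | nil => exact no_triangle m k hm hk _ _ _ e1 e2 e3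
        | cons e4 q4 => simp [SimpleGraph.Walk.length_cons] at hlen
end

section
/- For the automorphism φ of the free group F_{2m} on generators A_1,…,A_m,B_1,…,B_m defined by φ(A_i) = A_1⋯A_{i-1} A_i A_{i-1}⁻¹⋯A_1⁻¹ and φ(B_j) = A_1⋯A_m B_1⋯B_j A_{j-1}⁻¹⋯A_1⁻¹, one has φ^n(A_i) = A_1^n A_2^n ⋯ A_{i-1}^n · A_i · A_{i-1}^{-n} ⋯ A_1^{-n} for all n ≥ 0 and 1 ≤ i ≤ m. -/
/-- The free group `F_{2m}` on generators `A_1, …, A_m, B_1, …, B_m`. -/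
abbrev F2m (m : ℕ) := FreeGroup (Fin m ⊕ Fin m)

/-- The generator `A_t` (1-based, `1 ≤ t ≤ m`); junk value `1` otherwise. -/
def Aof (m t : ℕ) : F2m m :=
  if h : 1 ≤ t ∧ t ≤ m then FreeGroup.of (Sum.inl ⟨t - 1, by omega⟩) else 1

/-- The generator `B_t` (1-based, `1 ≤ t ≤ m`); junk value `1` otherwise. -/
def Bof (m t : ℕ) : F2m m :=
  if h : 1 ≤ t ∧ t ≤ m then FreeGroup.of (Sum.inr ⟨t - 1, by omega⟩) else 1

/-- The product `A_1 A_2 ⋯ A_j`. -/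
def prodA (m j : ℕ) : F2m m := ((List.range' 1 j).map (Aof m)).prod

/-- The product `B_1 B_2 ⋯ B_j`. -/
def prodB (m j : ℕ) : F2m m := ((List.range' 1 j).map (Bof m)).prod

/-- The product `A_1^n A_2^n ⋯ A_j^n`. -/
def prodAn (m j n : ℕ) : F2m m := ((List.range' 1 j).map fun t => Aof m t ^ n).prod

/-- The product `A_1^{-n} A_2^{-n} ⋯ A_j^{-n}`. -/
def prodAinv (m j n : ℕ) : F2m m := ((List.range' 1 j).map fun t => (Aof m t)⁻¹ ^ n).prod

/-- For the monodromy automorphism `φ` of `F_{2m}` given on generators by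
`φ(A_i) = A_1⋯A_{i-1} · A_i · A_{i-1}⁻¹⋯A_1⁻¹` and
`φ(B_j) = A_1⋯A_m · B_1⋯B_j · A_{j-1}⁻¹⋯A_1⁻¹`, one has
`φ^n(A_i) = A_1^n ⋯ A_{i-1}^n · A_i · A_{i-1}^{-n} ⋯ A_1^{-n}`
for all `n ≥ 0` and `1 ≤ i ≤ m`. -/
theorem phi_pow_A (m : ℕ) (φ : MulAut (F2m m))
    (hφA : ∀ i, 1 ≤ i → i ≤ m →
      φ (Aof m i) = prodA m (i - 1) * Aof m i * (prodA m (i - 1))⁻¹)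
    (hφB : ∀ j, 1 ≤ j → j ≤ m →
      φ (Bof m j) = prodA m m * prodB m j * (prodA m (j - 1))⁻¹) :
    ∀ (n i : ℕ), 1 ≤ i → i ≤ m →
      (φ ^ n) (Aof m i) = prodAn m (i - 1) n * Aof m i * (prodAn m (i - 1) n)⁻¹ := by
  intro n
  induction n with
  | zero =>
    intro i h1 h2
    have hz : prodAn m (i - 1) 0 = 1 := by
      simp [prodAn, pow_zero]
    simp [hz]
  | succ n ih =>
    have key : ∀ j, j ≤ m →
        (φ ^ n) (prodA m j) = prodAn m j (n + 1) * (prodAn m j n)⁻¹ := by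
      intro j
      induction j with
      | zero => intro _; simp [prodA, prodAn]
      | succ j ihj =>
        intro hj
        have hps : prodA m (j + 1) = prodA m j * Aof m (j + 1) := by
          rw [prodA, List.range'_concat, List.map_append, List.prod_append]
          simp [prodA, Nat.add_comm]
        have hns : ∀ k, prodAn m (j + 1) k = prodAn m j k * Aof m (j + 1) ^ k := by
          intro k
          rw [prodAn, List.range'_concat, List.map_append, List.prod_append]
          simp [prodAn, Nat.add_comm]
        have hA := ih (j + 1) (by omega) hj
        simp only [Nat.add_sub_cancel] at hA
        rw [hps, map_mul, hA, ihj (by omega), hns, hns, pow_succ]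
        group
    intro i h1 h2
    have hstep : (φ ^ (n + 1)) (Aof m i) = (φ ^ n) (φ (Aof m i)) := by
      rw [pow_succ]; rfl
    rw [hstep, hφA i h1 h2, map_mul, map_mul, map_inv,
      key (i - 1) (by omega), ih i h1 h2]
    group
end

section
/- With φ as above, the word length of φ^n(A_i) with respect to the free generators {A_1,…,A_m,B_1,…,B_m} equals 2(i−1)n + 1, for all n ≥ 0 and 1 ≤ i ≤ m. -/
/-- Conjugation commutes with powers. -/
lemma conj_pow_group {G : Type*} [Group G] (g a : G) (n : ℕ) :
    (g * a * g⁻¹) ^ n = g * a ^ n * g⁻¹ := by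
  induction n with
  | zero => simp
  | succ k ih => rw [pow_succ, pow_succ, ih]; group

/-- A word with no adjacent cancelling pair is its own reduction. -/
lemma reduce_eq_self_of_chain' {α : Type*} [DecidableEq α] :
    ∀ L : List (α × Bool), List.Chain' (fun a b => ¬(a.1 = b.1 ∧ a.2 = !b.2)) L →
      FreeGroup.reduce L = L := by
  intro L
  induction L with
  | nil => intro _; rfl
  | cons x L ih =>
    intro h
    rw [List.Chain', List.isChain_cons] at h
    have h1 : FreeGroup.reduce L = L := ih h.2
    rw [FreeGroup.reduce.cons, h1]
    cases L with
    | nil => rfl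
    | cons hd tl =>
      have hx := h.1 hd (by simp)
      simp only [if_neg hx]

lemma norm_conj_word {α : Type*} [DecidableEq α] (c : ℕ → α) (i n : ℕ)
    (hi : 2 ≤ i) (hn : 1 ≤ n) (hc : c (i - 1) ≠ c i) :
    FreeGroup.norm
      (((List.range' 1 (i - 1)).map (fun t => FreeGroup.of (c t) ^ n)).prod *
        FreeGroup.of (c i) *
        (((List.range' 1 (i - 1)).map (fun t => FreeGroup.of (c t) ^ n)).prod)⁻¹)
      = 2 * (i - 1) * n + 1 := by
  set F : List (α × Bool) :=
    (List.range' 1 (i - 1)).flatMap (fun t => List.replicate n (c t, true)) with hF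
  -- mk F equals the product
  have hmk : ∀ j : ℕ,
      FreeGroup.mk ((List.range' 1 j).flatMap (fun t => List.replicate n (c t, true)))
        = ((List.range' 1 j).map (fun t => FreeGroup.of (c t) ^ n)).prod := by
    intro j
    induction j with
    | zero => simp [← FreeGroup.one_eq_mk]
    | succ k ihk =>
      rw [List.range'_concat]
      simp only [List.flatMap_append, List.map_append, List.prod_append]
      rw [← FreeGroup.mul_mk, ihk]
      congr 1
      simp only [List.flatMap_cons, List.flatMap_nil, List.append_nil, List.map_cons,
        List.map_nil, List.prod_cons, List.prod_nil, mul_one]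
      rw [← FreeGroup.toWord_of_pow, FreeGroup.mk_toWord]
  -- the element as mk of an explicit word
  have hofi : FreeGroup.of (c i) = FreeGroup.mk [(c i, true)] := rfl
  have helt : ((List.range' 1 (i - 1)).map (fun t => FreeGroup.of (c t) ^ n)).prod *
      FreeGroup.of (c i) *
      (((List.range' 1 (i - 1)).map (fun t => FreeGroup.of (c t) ^ n)).prod)⁻¹
      = FreeGroup.mk ((F ++ [(c i, true)]) ++ FreeGroup.invRev F) := by
    rw [← hmk (i - 1), hofi, FreeGroup.inv_mk, FreeGroup.mul_mk, FreeGroup.mul_mk]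
  -- facts about F
  have hFmem : ∀ x ∈ F, x.2 = true := by
    intro x hx
    rw [hF, List.mem_flatMap] at hx
    obtain ⟨t, _, hxt⟩ := hx
    have := List.eq_of_mem_replicate hxt
    rw [this]
  have hFlast : F.getLast? = some (c (i - 1), true) := by
    rw [hF]
    obtain ⟨k, hk⟩ : ∃ k, i - 1 = k + 1 := ⟨i - 2, by omega⟩
    rw [hk, List.range'_concat]
    have h3 : 1 + 1 * k = k + 1 := by omega
    rw [h3]
    have hne : (List.replicate n ((c (k + 1), true) : α × Bool)) ≠ [] := by
      intro h
      have := congrArg List.length h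
      simp at this
      omega
    rw [List.flatMap_append, List.getLast?_append_of_ne_nil _ (by
      simpa using hne)]
    simp only [List.flatMap_cons, List.flatMap_nil, List.append_nil]
    rw [List.getLast?_replicate]
    simp only [if_neg (by omega : ¬ n = 0)]
  -- chain' condition
  set R : (α × Bool) → (α × Bool) → Prop := fun a b => ¬(a.1 = b.1 ∧ a.2 = !b.2) with hR
  have hchain : List.Chain' R ((F ++ [(c i, true)]) ++ FreeGroup.invRev F) := by
    rw [List.Chain', List.isChain_append]
    refine ⟨?_, ?_, ?_⟩
    · -- all snd = true
      have : ∀ x ∈ F ++ [(c i, true)], x.2 = true := by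
        intro x hx
        rcases List.mem_append.mp hx with h | h
        · exact hFmem x h
        · simp at h; rw [h]
      refine List.Pairwise.isChain ?_
      refine List.pairwise_iff_forall_sublist.mpr ?_
      intro a b hab
      have ha : a.2 = true := this a (hab.subset (by simp))
      have hb : b.2 = true := this b (hab.subset (by simp))
      rw [hR]
      simp [ha, hb]
    · -- all snd = false in invRev F
      have : ∀ x ∈ FreeGroup.invRev F, x.2 = false := by
        intro x hx
        rw [FreeGroup.invRev, List.mem_reverse, List.mem_map] at hx
        obtain ⟨y, hy, hxy⟩ := hx
        have := hFmem y hy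
        rw [← hxy]
        simp [this]
      refine List.Pairwise.isChain ?_
      refine List.pairwise_iff_forall_sublist.mpr ?_
      intro a b hab
      have ha : a.2 = false := this a (hab.subset (by simp))
      have hb : b.2 = false := this b (hab.subset (by simp))
      rw [hR]
      simp [ha, hb]
    · -- boundary
      intro x hx y hy
      rw [List.getLast?_append_of_ne_nil _ (by simp)] at hx
      obtain rfl : x = (c i, true) := by simpa using hx.symm
      obtain rfl : y = (c (i - 1), false) := by
        rw [FreeGroup.invRev, List.head?_reverse, List.getLast?_map, hFlast] at hy
        simpa using hy.symm
      rw [hR]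
      exact fun h => hc h.1.symm
  -- length computations
  have hFlen : F.length = (i - 1) * n := by
    rw [hF, List.length_flatMap]
    have : List.map (fun t => (List.replicate n ((c t, true) : α × Bool)).length)
        (List.range' 1 (i - 1)) = List.map (fun _ => n) (List.range' 1 (i - 1)) := by
      apply List.map_congr_left
      intro t _
      simp
    rw [this, List.map_const', List.sum_replicate, List.length_range']
    simp [smul_eq_mul, Nat.mul_comm]
  rw [helt, FreeGroup.norm, FreeGroup.toWord_mk, reduce_eq_self_of_chain' _ hchain]
  simp only [List.length_append, List.length_cons, List.length_nil, FreeGroup.invRev_length,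
    hFlen]
  ring

/-- With `φ` the monodromy automorphism of `F_{2m}`, the word length of
`φ^n(A_i)` with respect to the free generators `A_1,…,A_m,B_1,…,B_m`
equals `2(i−1)n + 1`, for all `n ≥ 0` and `1 ≤ i ≤ m`. -/
theorem norm_phi_pow_A (m : ℕ) (φ : MulAut (F2m m))
    (hφA : ∀ i, 1 ≤ i → i ≤ m →
      φ (Aof m i) = prodA m (i - 1) * Aof m i * (prodA m (i - 1))⁻¹)
    (hφB : ∀ j, 1 ≤ j → j ≤ m →
      φ (Bof m j) = prodA m m * prodB m j * (prodA m (j - 1))⁻¹) :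
    ∀ (n i : ℕ), 1 ≤ i → i ≤ m →
      FreeGroup.norm ((φ ^ n) (Aof m i)) = 2 * (i - 1) * n + 1 := by
  -- basic unfoldings
  have hA0 : ∀ n, prodAn m 0 n = 1 := by intro n; simp [prodAn]
  have hQ0 : prodA m 0 = 1 := by simp [prodA]
  have hAnsucc : ∀ j n, prodAn m (j + 1) n = prodAn m j n * Aof m (j + 1) ^ n := by
    intro j n
    simp [prodAn, List.range'_concat, Nat.add_comm 1 j]
  have hQsucc : ∀ j, prodA m (j + 1) = prodA m j * Aof m (j + 1) := by
    intro j
    simp [prodA, List.range'_concat, Nat.add_comm 1 j]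
  -- key lemma: image of prodAn under φ
  have K : ∀ j, j ≤ m → ∀ n, φ (prodAn m j n) = prodAn m j (n + 1) * (prodA m j)⁻¹ := by
    intro j
    induction j with
    | zero => intro _ n; simp [hA0, hQ0]
    | succ k ih =>
      intro hk n
      rw [hAnsucc k n, map_mul, map_pow, ih (by omega) n,
        hφA (k + 1) (by omega) (by omega)]
      have hks : k + 1 - 1 = k := by omega
      rw [hks, conj_pow_group, hAnsucc k (n + 1), hQsucc k]
      group
  -- closed formula for φ^n (A_i)
  have key : ∀ n i, 1 ≤ i → i ≤ m →
      (φ ^ n) (Aof m i) = prodAn m (i - 1) n * Aof m i * (prodAn m (i - 1) n)⁻¹ := by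
    intro n
    induction n with
    | zero =>
      intro i _ _
      have h1 : prodAn m (i - 1) 0 = 1 := by
        rw [prodAn]
        apply List.prod_eq_one
        intro x hx
        rw [List.mem_map] at hx
        obtain ⟨t, _, rfl⟩ := hx
        simp
      rw [pow_zero]
      simp [h1]
    | succ k ih =>
      intro i hi1 hi2
      rw [pow_succ', MulAut.mul_apply, ih i hi1 hi2, map_mul, map_mul, map_inv,
        K (i - 1) (by omega) k, hφA i hi1 hi2]
      group
  intro n i hi1 hi2
  rw [key n i hi1 hi2]
  -- trivial cases
  rcases Nat.eq_zero_or_pos n with hn | hn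
  · subst hn
    rw [show prodAn m (i - 1) 0 = 1 by
      rw [prodAn]
      apply List.prod_eq_one
      intro x hx
      rw [List.mem_map] at hx
      obtain ⟨t, _, rfl⟩ := hx
      simp]
    simp only [one_mul, inv_one, mul_one, Nat.mul_zero, Nat.zero_add]
    rw [Aof, dif_pos ⟨hi1, hi2⟩, FreeGroup.norm_of]
  rcases Nat.lt_or_ge i 2 with hi | hi
  · have : i = 1 := by omega
    subst this
    simp only [Nat.sub_self, hA0, one_mul, inv_one, mul_one]
    rw [Aof, dif_pos ⟨le_refl 1, hi2⟩, FreeGroup.norm_of]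
    omega
  -- main case: i ≥ 2, n ≥ 1
  have hm : 1 ≤ m := le_trans hi1 hi2
  set c : ℕ → Fin m ⊕ Fin m := fun t =>
    if h : 1 ≤ t ∧ t ≤ m then Sum.inl ⟨t - 1, by omega⟩ else Sum.inr ⟨0, hm⟩ with hcdef
  have hAc : ∀ t, 1 ≤ t → t ≤ m → Aof m t = FreeGroup.of (c t) := by
    intro t h1 h2
    rw [Aof, dif_pos ⟨h1, h2⟩, hcdef]
    simp only [dif_pos (⟨h1, h2⟩ : 1 ≤ t ∧ t ≤ m)]
  have hP : prodAn m (i - 1) n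
      = ((List.range' 1 (i - 1)).map (fun t => FreeGroup.of (c t) ^ n)).prod := by
    rw [prodAn]
    congr 1
    apply List.map_congr_left
    intro t ht
    rw [List.mem_range'] at ht
    rw [hAc t (by omega) (by omega)]
  have hc : c (i - 1) ≠ c i := by
    rw [hcdef]
    simp only [dif_pos (⟨by omega, by omega⟩ : 1 ≤ i - 1 ∧ i - 1 ≤ m),
      dif_pos (⟨hi1, hi2⟩ : 1 ≤ i ∧ i ≤ m)]
    intro h
    have := Sum.inl.inj h
    have := Fin.mk.inj_iff.mp this
    omega
  rw [hP, hAc i hi1 hi2]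
  exact norm_conj_word c i n hi hn hc
end

section
/- With φ as above, φ^n(A_1 A_2 ⋯ A_m) = A_1^{n+1} A_2^{n+1} ⋯ A_{m-1}^{n+1} · A_m · A_{m-1}^{-n} ⋯ A_2^{-n} A_1^{-n} for all n ≥ 0. -/

lemma conj_pow' {G : Type*} [Group G] (g a : G) (k : ℕ) :
    (g * a * g⁻¹) ^ k = g * a ^ k * g⁻¹ := by
  induction k with
  | zero => simp
  | succ k ih => rw [pow_succ, pow_succ, ih]; group

lemma prodAn_zero (m j : ℕ) : prodAn m j 0 = 1 := by
  simp [prodAn]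

lemma prodAn_one (m j : ℕ) : prodAn m j 1 = prodA m j := by
  simp [prodAn, prodA]

lemma prodAn_succ (m j k : ℕ) :
    prodAn m (j + 1) k = prodAn m j k * Aof m (j + 1) ^ k := by
  simp [prodAn, List.range'_concat, Nat.add_comm 1 j]

lemma prodA_succ (m j : ℕ) :
    prodA m (j + 1) = prodA m j * Aof m (j + 1) := by
  simp [prodA, List.range'_concat, Nat.add_comm 1 j]

lemma phi_prodAn (m : ℕ) (φ : MulAut (F2m m))
    (hφA : ∀ i, 1 ≤ i → i ≤ m →
      φ (Aof m i) = prodA m (i - 1) * Aof m i * (prodA m (i - 1))⁻¹) :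
    ∀ j, j ≤ m → ∀ k, φ (prodAn m j k) = prodAn m j (k + 1) * (prodA m j)⁻¹ := by
  intro j
  induction j with
  | zero => intro _ k; simp [prodAn, prodA]
  | succ j ih =>
    intro hj k
    have hA : φ (Aof m (j + 1)) = prodA m j * Aof m (j + 1) * (prodA m j)⁻¹ := by
      simpa using hφA (j + 1) (by omega) hj
    rw [prodAn_succ, map_mul, map_pow, ih (by omega), hA, conj_pow',
      prodAn_succ, prodA_succ]
    group

/-- With `φ` the monodromy automorphism of `F_{2m}`,
`φ^n(A_1 A_2 ⋯ A_m) = A_1^{n+1} ⋯ A_{m-1}^{n+1} · A_m · A_{m-1}^{-n} ⋯ A_1^{-n}`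
for all `n ≥ 0`. -/
theorem phi_pow_prodA (m : ℕ) (hm : 1 ≤ m) (φ : MulAut (F2m m))
    (hφA : ∀ i, 1 ≤ i → i ≤ m →
      φ (Aof m i) = prodA m (i - 1) * Aof m i * (prodA m (i - 1))⁻¹)
    (hφB : ∀ j, 1 ≤ j → j ≤ m →
      φ (Bof m j) = prodA m m * prodB m j * (prodA m (j - 1))⁻¹) :
    ∀ n : ℕ, (φ ^ n) (prodA m m) =
      prodAn m (m - 1) (n + 1) * Aof m m * (prodAn m (m - 1) n)⁻¹ := by
  have key := phi_prodAn m φ hφA (m - 1) (by omega)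
  have hAm : φ (Aof m m) = prodA m (m - 1) * Aof m m * (prodA m (m - 1))⁻¹ :=
    hφA m hm le_rfl
  have hsplit : prodA m m = prodAn m (m - 1) 1 * Aof m m := by
    obtain ⟨m', rfl⟩ : ∃ m', m = m' + 1 := ⟨m - 1, by omega⟩
    rw [prodA_succ, prodAn_one]; simp
  intro n
  induction n with
  | zero => simpa [prodAn_zero] using hsplit
  | succ n ih =>
    rw [pow_succ', MulAut.mul_apply, ih, map_mul, map_mul, map_inv, key, key,
      hAm]
    group
end

section
/- With φ as above, the word length ‖φ^{-n}(A_i)‖ equals ‖φ^n(A_i)‖ = 2(i−1)n + 1 for all n ≥ 0 and 1 ≤ i ≤ m. -/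
open FreeGroup in
lemma myreduce_eq_self {α} [DecidableEq α] : ∀ {L : List (α × Bool)},
    L.Chain' (fun p q => ¬(p.1 = q.1 ∧ p.2 = !q.2)) → FreeGroup.reduce L = L := by
  intro L
  induction L with
  | nil => intro _; rfl
  | cons x L ih =>
    intro h
    rw [FreeGroup.reduce.cons, ih h.tail]
    cases L with
    | nil => rfl
    | cons y t =>
      have hxy : ¬(x.1 = y.1 ∧ x.2 = !y.2) := (List.isChain_cons_cons.mp h).1
      simp only [if_neg hxy]

lemma mychain'_of_forall {β} {R : β → β → Prop} : ∀ {L : List β},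
    (∀ p ∈ L, ∀ q ∈ L, R p q) → L.Chain' R := by
  intro L
  induction L with
  | nil => intro _; exact List.isChain_nil
  | cons x L ih =>
    intro h
    cases L with
    | nil => exact List.isChain_singleton _
    | cons y t =>
      refine List.isChain_cons_cons.mpr ⟨h x (by simp) y (by simp), ih ?_⟩
      intro p hp q hq
      exact h p (by simp [hp]) q (by simp [hq])

lemma mynorm_mk {α} [DecidableEq α] {L : List (α × Bool)}
    (h : L.Chain' (fun p q => ¬(p.1 = q.1 ∧ p.2 = !q.2))) :
    FreeGroup.norm (FreeGroup.mk L) = L.length := by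
  rw [FreeGroup.norm, FreeGroup.toWord_mk, myreduce_eq_self h]

lemma mymk_pow {α} (x : α × Bool) (n : ℕ) :
    (FreeGroup.mk [x]) ^ n = FreeGroup.mk (List.replicate n x) := by
  induction n with
  | zero => rw [pow_zero, List.replicate_zero, FreeGroup.one_eq_mk]
  | succ n ih =>
    rw [pow_succ', ih, FreeGroup.mul_mk]
    rfl

lemma mynorm_conj {α} [DecidableEq α] (a : ℕ → α) (k n : ℕ) (b : Bool)
    (hne : ∀ j < k, a j ≠ a k) :
    FreeGroup.norm
      ((((List.range k).map fun j => (FreeGroup.mk [(a j, b)]) ^ n).prod) *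
        FreeGroup.of (a k) *
        (((List.range k).map fun j => (FreeGroup.mk [(a j, b)]) ^ n).prod)⁻¹)
      = 2 * k * n + 1 := by
  have hC : ∀ K, (((List.range K).map fun j => (FreeGroup.mk [(a j, b)]) ^ n).prod)
      = FreeGroup.mk ((List.range K).flatMap (fun j => List.replicate n (a j, b))) := by
    intro K
    induction K with
    | zero => simp [FreeGroup.one_eq_mk]
    | succ K ih =>
      rw [List.range_succ, List.map_append, List.prod_append, List.flatMap_append, ih]
      simp [mymk_pow, FreeGroup.mul_mk]
  set Lc := (List.range k).flatMap (fun j => List.replicate n (a j, b)) with hLc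
  have hmem : ∀ x ∈ Lc, ∃ j, j < k ∧ x = (a j, b) := by
    intro x hx
    simp only [hLc, List.mem_flatMap, List.mem_range, List.mem_replicate] at hx
    obtain ⟨j, hj, -, rfl⟩ := hx
    exact ⟨j, hj, rfl⟩
  have hmem' : ∀ x ∈ FreeGroup.invRev Lc, ∃ j, j < k ∧ x = (a j, !b) := by
    intro x hx
    simp only [FreeGroup.invRev, List.mem_reverse, List.mem_map] at hx
    obtain ⟨y, hy, rfl⟩ := hx
    obtain ⟨j, hj, rfl⟩ := hmem y hy
    exact ⟨j, hj, rfl⟩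
  have hof : FreeGroup.of (a k) = FreeGroup.mk [(a k, true)] := rfl
  have hE : (((List.range k).map fun j => (FreeGroup.mk [(a j, b)]) ^ n).prod) *
        FreeGroup.of (a k) *
        (((List.range k).map fun j => (FreeGroup.mk [(a j, b)]) ^ n).prod)⁻¹
      = FreeGroup.mk (Lc ++ ((a k, true) :: FreeGroup.invRev Lc)) := by
    rw [hC k, hof, FreeGroup.inv_mk, FreeGroup.mul_mk, FreeGroup.mul_mk]
    simp [hLc]
  have hchain : (Lc ++ ((a k, true) :: FreeGroup.invRev Lc)).Chain'
      (fun p q => ¬(p.1 = q.1 ∧ p.2 = !q.2)) := by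
    change List.IsChain _ _
    rw [List.isChain_append]
    refine ⟨?_, ?_, ?_⟩
    · refine mychain'_of_forall (fun p hp q hq => ?_)
      obtain ⟨j, -, rfl⟩ := hmem p hp
      obtain ⟨l, -, rfl⟩ := hmem q hq
      simp
    · rw [List.isChain_cons]
      refine ⟨?_, ?_⟩
      · intro y hy
        obtain ⟨j, hj, rfl⟩ := hmem' y (List.mem_of_mem_head? hy)
        rintro ⟨h1, -⟩
        exact hne j hj h1.symm
      · refine mychain'_of_forall (fun p hp q hq => ?_)
        obtain ⟨j, -, rfl⟩ := hmem' p hp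
        obtain ⟨l, -, rfl⟩ := hmem' q hq
        simp
    · intro p hp q hq
      obtain ⟨j, hj, rfl⟩ := hmem p (List.mem_of_mem_getLast? hp)
      rw [List.head?_cons, Option.mem_some_iff] at hq
      subst hq
      rintro ⟨h1, -⟩
      exact hne j hj h1
  rw [hE, mynorm_mk hchain]
  have hlen : Lc.length = k * n := by
    simp [hLc, List.length_flatMap, Function.comp_def, List.map_const', mul_comm]
  simp [List.length_append, hlen, FreeGroup.invRev_length]
  ring




/-- With `φ` the monodromy automorphism of `F_{2m}`, the word length of
`φ^{-n}(A_i)` equals that of `φ^n(A_i)`, namely `2(i−1)n + 1`,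
for all `n ≥ 0` and `1 ≤ i ≤ m`. -/

theorem norm_phi_inv_pow_A (m : ℕ) (φ : MulAut (F2m m))
    (hφA : ∀ i, 1 ≤ i → i ≤ m →
      φ (Aof m i) = prodA m (i - 1) * Aof m i * (prodA m (i - 1))⁻¹)
    (hφB : ∀ j, 1 ≤ j → j ≤ m →
      φ (Bof m j) = prodA m m * prodB m j * (prodA m (j - 1))⁻¹) :
    ∀ (n i : ℕ), 1 ≤ i → i ≤ m →
      FreeGroup.norm ((φ⁻¹ ^ n) (Aof m i)) = FreeGroup.norm ((φ ^ n) (Aof m i)) ∧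
      FreeGroup.norm ((φ⁻¹ ^ n) (Aof m i)) = 2 * (i - 1) * n + 1 := by
  -- splitting lemmas
  have hsplitQ : ∀ K c, prodAn m (K+1) c = prodAn m K c * (Aof m (1+K)) ^ c := by
    intro K c
    rw [prodAn, prodAn, List.range'_concat, List.map_append, List.prod_append]
    simp
  have hsplitV : ∀ K c, prodAinv m (K+1) c = prodAinv m K c * ((Aof m (1+K))⁻¹) ^ c := by
    intro K c
    rw [prodAinv, prodAinv, List.range'_concat, List.map_append, List.prod_append]
    simp
  have hsplitP : ∀ K, prodA m (K+1) = prodA m K * Aof m (1+K) := by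
    intro K
    rw [prodA, prodA, List.range'_concat, List.map_append, List.prod_append]
    simp
  have hP1 : ∀ K, prodAn m K 1 = prodA m K := by
    intro K; rw [prodAn, prodA]; simp
  have L0 : ∀ K, K ≤ m → ∀ c, φ (prodAn m K c) = prodAn m K (c+1) * (prodA m K)⁻¹ := by
    intro K
    induction K with
    | zero => intro _ c; simp [prodAn, prodA]
    | succ K ih =>
      intro hK c
      have hA := hφA (1+K) (by omega) (by omega)
      have h1 : 1 + K - 1 = K := by omega
      rw [h1] at hA
      rw [hsplitQ, map_mul, ih (by omega) c, map_pow, hA, hsplitQ, hsplitP, conj_pow]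
      group
  have L0' : ∀ K, K ≤ m → ∀ c, φ (prodAinv m K (c+1)) = prodAinv m K c * (prodA m K)⁻¹ := by
    intro K
    induction K with
    | zero => intro _ c; simp [prodAinv, prodA]
    | succ K ih =>
      intro hK c
      have hA := hφA (1+K) (by omega) (by omega)
      have h1 : 1 + K - 1 = K := by omega
      rw [h1] at hA
      rw [hsplitV, map_mul, ih (by omega) c, map_pow, map_inv, hA, hsplitV, hsplitP,
        mul_inv_rev, mul_inv_rev, inv_inv,
        show prodA m K * ((Aof m (1+K))⁻¹ * (prodA m K)⁻¹)
          = prodA m K * (Aof m (1+K))⁻¹ * (prodA m K)⁻¹ from (mul_assoc _ _ _).symm,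
        conj_pow]
      group
  intro n i hi1 him
  have hm1 : 1 ≤ m := le_trans hi1 him
  set k := i - 1 with hk
  have hkm : k ≤ m - 1 := by omega
  have hkm' : k ≤ m := by omega
  have hAik : φ (Aof m i) = prodA m k * Aof m i * (prodA m k)⁻¹ := hφA i hi1 him
  have hQ0 : prodAn m k 0 = 1 := by
    rw [prodAn]
    apply List.prod_eq_one
    intro x hx
    simp only [List.mem_map] at hx
    obtain ⟨t, -, rfl⟩ := hx
    exact pow_zero _
  have hV0 : prodAinv m k 0 = 1 := by
    rw [prodAinv]
    apply List.prod_eq_one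
    intro x hx
    simp only [List.mem_map] at hx
    obtain ⟨t, -, rfl⟩ := hx
    exact pow_zero _
  -- positive iterates
  have hWpos : ∀ n', (φ ^ n') (Aof m i)
      = prodAn m k n' * Aof m i * (prodAn m k n')⁻¹ := by
    intro n'
    induction n' with
    | zero => simp [hQ0]
    | succ n' ih =>
      rw [pow_succ', MulAut.mul_apply, ih, map_mul, map_mul, map_inv,
        L0 k hkm' n', hAik]
      group
  -- negative iterates
  have hWneg : ∀ n', (φ ^ n') (prodAinv m k n' * Aof m i * (prodAinv m k n')⁻¹)
      = Aof m i := by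
    intro n'
    induction n' with
    | zero => simp [hV0]
    | succ n' ih =>
      rw [pow_succ, MulAut.mul_apply]
      have hstep : φ (prodAinv m k (n'+1) * Aof m i * (prodAinv m k (n'+1))⁻¹)
          = prodAinv m k n' * Aof m i * (prodAinv m k n')⁻¹ := by
        rw [map_mul, map_mul, map_inv, L0' k hkm' n', hAik]
        group
      rw [hstep, ih]
  have hinv : ∀ n', (φ⁻¹ ^ n') (Aof m i)
      = prodAinv m k n' * Aof m i * (prodAinv m k n')⁻¹ := by
    intro n'
    conv_lhs => rw [← hWneg n']
    rw [inv_pow]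
    exact MulEquiv.symm_apply_apply _ _
  -- letters
  have ha : ∀ j : ℕ, j ≤ m - 1 → True := fun _ _ => trivial
  set av : ℕ → (Fin m ⊕ Fin m) := fun j => Sum.inl ⟨min j (m-1), by omega⟩ with hav
  have hne : ∀ j < k, av j ≠ av k := by
    intro j hj h
    simp only [hav, Sum.inl.injEq, Fin.mk.injEq] at h
    omega
  have hAof : ∀ t, 1 ≤ t → t ≤ m → Aof m t = FreeGroup.mk [(av (t-1), true)] := by
    intro t h1 h2
    rw [Aof, dif_pos ⟨h1, h2⟩]
    have h3 : Sum.inl (α := Fin m) (β := Fin m) ⟨t - 1, by omega⟩ = av (t-1) := by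
      simp only [hav, Sum.inl.injEq]
      apply Fin.ext
      show t - 1 = min (t - 1) (m - 1)
      omega
    rw [h3]
    rfl
  have hAofInv : ∀ t, 1 ≤ t → t ≤ m → (Aof m t)⁻¹ = FreeGroup.mk [(av (t-1), false)] := by
    intro t h1 h2
    rw [hAof t h1 h2, FreeGroup.inv_mk]
    rfl
  have hQconv : ∀ c, prodAn m k c
      = ((List.range k).map fun j => (FreeGroup.mk [(av j, true)]) ^ c).prod := by
    intro c
    rw [prodAn, List.range'_eq_map_range, List.map_map]
    congr 1
    apply List.map_congr_left
    intro j hj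
    rw [List.mem_range] at hj
    simp only [Function.comp_apply]
    have h4 : 1 + j - 1 = j := by omega
    rw [hAof (1+j) (by omega) (by omega), h4]
  have hVconv : ∀ c, prodAinv m k c
      = ((List.range k).map fun j => (FreeGroup.mk [(av j, false)]) ^ c).prod := by
    intro c
    rw [prodAinv, List.range'_eq_map_range, List.map_map]
    congr 1
    apply List.map_congr_left
    intro j hj
    rw [List.mem_range] at hj
    simp only [Function.comp_apply]
    have h4 : 1 + j - 1 = j := by omega
    rw [hAofInv (1+j) (by omega) (by omega), h4]
  have hAi : Aof m i = FreeGroup.of (av k) := by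
    rw [hAof i hi1 him]
    rfl
  have hnormpos : FreeGroup.norm ((φ ^ n) (Aof m i)) = 2 * k * n + 1 := by
    rw [hWpos n, hQconv n, hAi]
    exact mynorm_conj av k n true hne
  have hnormneg : FreeGroup.norm ((φ⁻¹ ^ n) (Aof m i)) = 2 * k * n + 1 := by
    rw [hinv n, hVconv n, hAi]
    exact mynorm_conj av k n false hne
  exact ⟨by rw [hnormpos, hnormneg], hnormneg⟩
end

section
/- With φ⁻¹ given by φ⁻¹(A_i) = A_1⁻¹⋯A_{i-1}⁻¹ A_i A_{i-1}⋯A_1 and φ⁻¹(B_1) = A_1⁻¹⋯A_m⁻¹ B_1, one has φ^{-n}(B_1) = A_1^{-n} A_2^{-n} ⋯ A_m^{-n} · B_1, hence ‖φ^{-n}(B_1)‖ = mn + 1 for all n ≥ 0. -/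
section aux
variable {α : Type*} [DecidableEq α]

lemma my_reduce_eq_self_of_chain {L : List (α × Bool)}
    (h : L.Chain' fun a b => ¬(a.1 = b.1 ∧ a.2 = !b.2)) : FreeGroup.reduce L = L := by
  induction L with
  | nil => rfl
  | cons hd tl ih =>
    unfold List.Chain' at h; rw [List.isChain_cons] at h
    rw [FreeGroup.reduce.cons, ih h.2]
    cases tl with
    | nil => rfl
    | cons hd2 tl2 => simp only [if_neg (h.1 hd2 rfl)]

omit [DecidableEq α] in
lemma my_mk_pow (x : α × Bool) (n : ℕ) :
    (FreeGroup.mk [x]) ^ n = FreeGroup.mk (List.replicate n x) := by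
  induction n with
  | zero => rfl
  | succ n ih => rw [pow_succ', ih, FreeGroup.mul_mk, List.replicate_succ]; rfl

omit [DecidableEq α] in
lemma my_inv_of (a : α) : (FreeGroup.of a)⁻¹ = FreeGroup.mk [(a, false)] := by
  show (FreeGroup.mk [(a, true)])⁻¹ = _
  rw [FreeGroup.inv_mk]; rfl
lemma my_conj_pow {G : Type*} [Group G] (a b : G) (n : ℕ) :
    (a * b * a⁻¹) ^ n = a * b ^ n * a⁻¹ := by
  induction n with
  | zero => simp
  | succ n ih => rw [pow_succ, pow_succ, ih]; group
end aux

/-- The word for `(A_t)^{-n}` (empty if `t` out of range). -/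
def wordA (m n t : ℕ) : List ((Fin m ⊕ Fin m) × Bool) :=
  if h : 1 ≤ t ∧ t ≤ m then List.replicate n (Sum.inl ⟨t - 1, by omega⟩, false) else []

lemma Ainv_pow_eq_mk (m n t : ℕ) : (Aof m t)⁻¹ ^ n = FreeGroup.mk (wordA m n t) := by
  unfold Aof wordA
  split
  · rw [my_inv_of, my_mk_pow]
  · simp only [inv_one, one_pow]; rfl

lemma prodAinv_succ (m j n : ℕ) :
    prodAinv m (j + 1) n = prodAinv m j n * (Aof m (j + 1))⁻¹ ^ n := by
  unfold prodAinv
  rw [List.range'_concat, List.map_append, List.prod_append]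
  simp [Nat.add_comm 1 j]

lemma prodAinv_eq_mk (m j n : ℕ) :
    prodAinv m j n = FreeGroup.mk ((List.range' 1 j).flatMap (wordA m n)) := by
  induction j with
  | zero => rfl
  | succ j ih =>
    rw [prodAinv_succ, ih, Ainv_pow_eq_mk, FreeGroup.mul_mk, List.range'_concat,
      List.flatMap_append]
    have h1 : 1 + 1 * j = j + 1 := by omega
    rw [h1]
    simp [List.flatMap]

lemma wordA_len (m n t : ℕ) (h1 : 1 ≤ t) (h2 : t ≤ m) : (wordA m n t).length = n := by
  unfold wordA; rw [dif_pos ⟨h1, h2⟩, List.length_replicate]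

lemma flat_len (m n : ℕ) (j : ℕ) (hj : j ≤ m) :
    ((List.range' 1 j).flatMap (wordA m n)).length = j * n := by
  induction j with
  | zero => simp
  | succ j ih =>
    rw [List.range'_concat, List.flatMap_append]
    have h1 : 1 + 1 * j = j + 1 := by omega
    rw [h1]
    simp only [List.length_append, ih (by omega)]
    simp [List.flatMap, wordA_len m n (j + 1) (by omega) (by omega), Nat.succ_mul]

lemma flat_mem (m n : ℕ) (j : ℕ) {x : (Fin m ⊕ Fin m) × Bool}
    (hx : x ∈ (List.range' 1 j).flatMap (wordA m n)) : (∃ i, x.1 = Sum.inl i) ∧ x.2 = false := by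
  rw [List.mem_flatMap] at hx
  obtain ⟨t, -, hxt⟩ := hx
  unfold wordA at hxt
  split at hxt
  · rw [List.mem_replicate] at hxt
    rw [hxt.2]
    exact ⟨⟨_, rfl⟩, rfl⟩
  · simp at hxt

/-- norm computation -/
lemma norm_eq (m n : ℕ) (hm : 1 ≤ m) :
    FreeGroup.norm (prodAinv m m n * Bof m 1) = m * n + 1 := by
  have hB : Bof m 1 = FreeGroup.mk [(Sum.inr ⟨0, by omega⟩, true)] := by
    unfold Bof; rw [dif_pos ⟨le_refl 1, hm⟩]; rfl
  set W := (List.range' 1 m).flatMap (wordA m n) with hW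
  have hE : prodAinv m m n * Bof m 1 = FreeGroup.mk (W ++ [(Sum.inr ⟨0, by omega⟩, true)]) := by
    rw [prodAinv_eq_mk, hB, FreeGroup.mul_mk]
  rw [hE]
  have hchain : (W ++ [((Sum.inr ⟨0, by omega⟩ : Fin m ⊕ Fin m), true)]).Chain'
      fun a b => ¬(a.1 = b.1 ∧ a.2 = !b.2) := by
    unfold List.Chain'; rw [List.isChain_append]
    refine ⟨?_, List.isChain_singleton _, ?_⟩
    · refine List.Pairwise.isChain (List.pairwise_of_forall_mem_list fun a ha b hb => ?_)
      have := (flat_mem m n m ha).2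
      have := (flat_mem m n m hb).2
      rintro ⟨-, h2⟩
      simp_all
    · intro x hx y hy
      have hxW : x ∈ W := List.mem_of_mem_getLast? hx
      obtain ⟨i, hi⟩ := (flat_mem m n m hxW).1
      have hy' : (Sum.inr ⟨0, by omega⟩, true) = y := by simpa using hy
      rintro ⟨h1, -⟩
      rw [← hy', hi] at h1
      simp at h1
  show (FreeGroup.mk _).toWord.length = _
  rw [FreeGroup.toWord_mk, my_reduce_eq_self_of_chain hchain]
  simp [hW, flat_len m n m le_rfl]

/-- With `φ⁻¹` given on generators by
`φ⁻¹(A_i) = A_1⁻¹⋯A_{i-1}⁻¹ · A_i · A_{i-1}⋯A_1` and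
`φ⁻¹(B_1) = A_1⁻¹⋯A_m⁻¹ · B_1`, one has
`φ^{-n}(B_1) = A_1^{-n} A_2^{-n} ⋯ A_m^{-n} · B_1`, hence
`‖φ^{-n}(B_1)‖ = mn + 1` for all `n ≥ 0`. -/
theorem phi_inv_pow_B1 (m : ℕ) (hm : 1 ≤ m) (φ : MulAut (F2m m))
    (hinvA : ∀ i, 1 ≤ i → i ≤ m →
      φ⁻¹ (Aof m i) = prodAinv m (i - 1) 1 * Aof m i * (prodAinv m (i - 1) 1)⁻¹)
    (hinvB : φ⁻¹ (Bof m 1) = prodAinv m m 1 * Bof m 1) :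
    ∀ n : ℕ, (φ⁻¹ ^ n) (Bof m 1) = prodAinv m m n * Bof m 1 ∧
      FreeGroup.norm ((φ⁻¹ ^ n) (Bof m 1)) = m * n + 1 := by
  -- the telescoping computation
  have key : ∀ n : ℕ, ∀ j ≤ m,
      φ⁻¹ (prodAinv m j n) = prodAinv m j (n + 1) * (prodAinv m j 1)⁻¹ := by
    intro n j
    induction j with
    | zero => intro _; simp [prodAinv]
    | succ j ih =>
      intro hj
      have hij := ih (by omega)
      have hA := hinvA (j + 1) (by omega) hj
      simp only [Nat.add_sub_cancel] at hA
      have hc : (φ⁻¹ ((Aof m (j + 1))⁻¹ ^ n))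
          = prodAinv m j 1 * (Aof m (j + 1))⁻¹ ^ n * (prodAinv m j 1)⁻¹ := by
        rw [map_pow, map_inv, hA,
          show (prodAinv m j 1 * Aof m (j + 1) * (prodAinv m j 1)⁻¹)⁻¹
            = prodAinv m j 1 * (Aof m (j + 1))⁻¹ * (prodAinv m j 1)⁻¹ by group,
          my_conj_pow]
      rw [prodAinv_succ, map_mul, hij, hc,
        prodAinv_succ m j (n + 1), prodAinv_succ m j 1]
      group
  have main : ∀ n : ℕ, (φ⁻¹ ^ n) (Bof m 1) = prodAinv m m n * Bof m 1 := by
    intro n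
    induction n with
    | zero => simp [prodAinv]
    | succ n ih =>
      rw [pow_succ', MulAut.mul_apply, ih, map_mul, hinvB, key n m le_rfl,
        mul_assoc, inv_mul_cancel_left]
  intro n
  refine ⟨main n, ?_⟩
  rw [main n, norm_eq m n hm]
end

section
/- Let M be the (m+k)×(m+k) block matrix [[I_m, D],[0, C]] where D is the m×k all-ones matrix and C is the k×k upper-triangular matrix with 1's on and above the diagonal. Then all eigenvalues of M equal 1, rank(M − I) = k, rank((M − I)²) = k−1, and the Jordan normal form of M consists of one Jordan block of size k+1 and m−1 blocks of size 1. -/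
open Polynomial

open Finset

namespace BMJF

lemma alt_partial (a : ℕ) : ∀ s : ℕ, ∑ r ∈ Finset.range (s+1), (-1:ℂ)^r * ((a+1).choose r) = (-1)^s * (a.choose s)
  | 0 => by simp
  | (s+1) => by
    rw [Finset.sum_range_succ, alt_partial a s, Nat.choose_succ_succ' a s]
    push_cast
    ring

lemma alt_full (n : ℕ) : ∑ r ∈ Finset.range (n+1), (-1:ℂ)^r * (n.choose r) = if n = 0 then 1 else 0 := by
  cases n with
  | zero => simp
  | succ a =>
    rw [alt_partial a (a+1), Nat.choose_succ_self, if_neg (Nat.succ_ne_zero a)]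
    simp

lemma alt_zero (a t : ℕ) (h : a + 2 ≤ t) : ∑ r ∈ Finset.range t, (-1:ℂ)^r * ((a+1).choose r) = 0 := by
  rw [← Finset.sum_subset (Finset.range_subset_range.2 h)]
  · rw [alt_partial a (a+1), Nat.choose_succ_self]
    simp
  · intro x _ hx
    rw [Finset.mem_range, not_lt] at hx
    rw [Nat.choose_eq_zero_of_lt (by omega)]
    simp

lemma row0 (t : ℕ) (h : 1 ≤ t) : ∑ r ∈ Finset.range t, (-1:ℂ)^r * ((0:ℕ).choose r) = 1 := by
  rw [Finset.sum_eq_single 0]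
  · simp
  · intro b _ hb
    obtain ⟨c, rfl⟩ := Nat.exists_eq_succ_of_ne_zero hb
    simp [Nat.choose_zero_succ]
  · intro h0
    exact absurd (Finset.mem_range.2 h) h0

lemma pascal_orth (k r s : ℕ) (hr : r < k) :
    ∑ u ∈ Finset.range k, (-1:ℂ)^(u+s) * (u.choose s) * (r.choose u) = if s = r then 1 else 0 := by
  have h1 : ∑ u ∈ Finset.range (r+1), (-1:ℂ)^(u+s) * (u.choose s) * (r.choose u)
      = ∑ u ∈ Finset.range k, (-1:ℂ)^(u+s) * (u.choose s) * (r.choose u) := by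
    apply Finset.sum_subset (Finset.range_subset_range.2 hr)
    intro x _ hx
    rw [Finset.mem_range, not_lt] at hx
    rw [Nat.choose_eq_zero_of_lt (show r < x by omega)]
    simp
  rw [← h1]
  by_cases hs : s ≤ r
  · have h2 : ∑ u ∈ Finset.Ico s (r+1), (-1:ℂ)^(u+s) * (u.choose s) * (r.choose u)
        = ∑ u ∈ Finset.range (r+1), (-1:ℂ)^(u+s) * (u.choose s) * (r.choose u) := by
      apply Finset.sum_subset
      · intro x hx
        rw [Finset.mem_Ico] at hx
        exact Finset.mem_range.2 hx.2
      · intro x hx hx'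
        rw [Finset.mem_range] at hx
        rw [Finset.mem_Ico, not_and_or, not_le, not_lt] at hx'
        have : x < s := by omega
        rw [Nat.choose_eq_zero_of_lt this]
        simp
    rw [← h2, Finset.sum_Ico_eq_sum_range]
    have h3 : ∀ u ∈ Finset.range (r + 1 - s), (-1:ℂ)^(s+u+s) * ((s+u).choose s) * (r.choose (s+u))
        = (r.choose s : ℂ) * ((-1:ℂ)^u * ((r-s).choose u)) := by
      intro u hu
      rw [Finset.mem_range] at hu
      have key : r.choose (s+u) * (s+u).choose s = r.choose s * (r-s).choose ((s+u)-s) :=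
        Nat.choose_mul (by omega)
      rw [Nat.add_sub_cancel_left] at key
      have : ((s+u).choose s : ℂ) * (r.choose (s+u)) = (r.choose s : ℂ) * ((r-s).choose u) := by
        rw [mul_comm]
        exact_mod_cast congrArg (Nat.cast : ℕ → ℂ) key
      calc (-1:ℂ)^(s+u+s) * ((s+u).choose s) * (r.choose (s+u))
          = (-1:ℂ)^(u+2*s) * (((s+u).choose s : ℂ) * (r.choose (s+u))) := by ring_nf
        _ = (-1:ℂ)^u * (((s+u).choose s : ℂ) * (r.choose (s+u))) := by
            rw [pow_add, pow_mul]; simp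
        _ = (r.choose s : ℂ) * ((-1:ℂ)^u * ((r-s).choose u)) := by rw [this]; ring
    rw [Finset.sum_congr rfl h3, ← Finset.mul_sum]
    have hrs : r + 1 - s = (r - s) + 1 := by omega
    rw [hrs, alt_full (r-s)]
    by_cases h : s = r
    · subst h; simp
    · rw [if_neg h, if_neg (by omega : ¬ r - s = 0)]
      simp
  · rw [if_neg (by omega : ¬ s = r)]
    apply Finset.sum_eq_zero
    intro u hu
    rw [Finset.mem_range] at hu
    rw [Nat.choose_eq_zero_of_lt (by omega : u < s)]
    simp

end BMJF
open Finset

namespace BMJF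

/-- single-indicator sum helper -/
lemma sum_ind {n : ℕ} (c : ℕ) (f : ℕ → ℂ) :
    ∑ j : Fin n, (if (j:ℕ) = c then f (j:ℕ) else 0) = if c < n then f c else 0 := by
  by_cases h : c < n
  · rw [if_pos h, Finset.sum_eq_single (⟨c, h⟩ : Fin n)]
    · simp
    · intro b _ hb
      rw [if_neg]
      intro hbc
      exact hb (Fin.ext hbc)
    · intro h0; exact absurd (Finset.mem_univ _) h0
  · rw [if_neg h]
    apply Finset.sum_eq_zero
    intro j _
    rw [if_neg]
    intro hj
    exact h (hj ▸ j.isLt)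

def Pmat (m k : ℕ) : Matrix (Fin (m+k)) (Fin (m+k)) ℂ :=
  Matrix.of fun i j =>
    if (j:ℕ) = 0 then (if (i:ℕ) < m then 1 else 0)
    else if (j:ℕ) ≤ k then
      (if (i:ℕ) < m then 0
        else (-1)^((j:ℕ)-1+((i:ℕ)-m)) * (Nat.choose ((j:ℕ)-1) ((i:ℕ)-m) : ℂ))
    else (if (i:ℕ) = (j:ℕ) - k then 1 else 0)

def Qmat (m k : ℕ) : Matrix (Fin (m+k)) (Fin (m+k)) ℂ :=
  Matrix.of fun j i =>
    if (i:ℕ) = 0 then (if (j:ℕ) = 0 then 1 else if k+1 ≤ (j:ℕ) then -1 else 0)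
    else if (i:ℕ) < m then (if (j:ℕ) = k + (i:ℕ) then 1 else 0)
    else (if 1 ≤ (j:ℕ) ∧ (j:ℕ) ≤ k then (Nat.choose ((i:ℕ)-m) ((j:ℕ)-1) : ℂ) else 0)

def Jmat (m k : ℕ) : Matrix (Fin (m+k)) (Fin (m+k)) ℂ :=
  Matrix.of (fun i j : Fin (m + k) =>
    if i = j then 1
    else if (j : ℕ) = (i : ℕ) + 1 ∧ (j : ℕ) ≤ k then 1 else (0 : ℂ))

end BMJF

namespace BMJF

lemma PQ_eq_one (m k : ℕ) (hk : 1 ≤ k) (hkm : k ≤ m) :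
    Pmat m k * Qmat m k = 1 := by
  have hm1 : 1 ≤ m := le_trans hk hkm
  ext i i'
  rw [Matrix.mul_apply, Matrix.one_apply]
  by_cases h0 : (i':ℕ) = 0
  · -- column 0 of Q
    have hsplit : ∀ j : Fin (m+k), Pmat m k i j * Qmat m k j i' =
        (if (j:ℕ) = 0 then (if (i:ℕ) < m then (1:ℂ) else 0) else 0)
        + (if (j:ℕ) = k + (i:ℕ) then
            (if 1 ≤ (i:ℕ) ∧ (i:ℕ) < m then (-1:ℂ) else 0) else 0) := by
      intro j
      have hj := j.isLt
      simp only [Pmat, Qmat, Matrix.of_apply, h0]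
      split_ifs <;> first | (exfalso; omega) | norm_num
    rw [Finset.sum_congr rfl (fun j _ => hsplit j), Finset.sum_add_distrib,
      sum_ind 0 (fun _ => if (i:ℕ) < m then (1:ℂ) else 0),
      sum_ind (k + (i:ℕ)) (fun _ => if 1 ≤ (i:ℕ) ∧ (i:ℕ) < m then (-1:ℂ) else 0)]
    have hii : (i = i') ↔ ((i:ℕ) = 0) := by
      rw [Fin.ext_iff, h0]
    rw [if_congr hii rfl rfl]
    have hik := i.isLt
    split_ifs <;> first | (exfalso; omega) | norm_num
  · by_cases h1 : (i':ℕ) < m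
    · -- columns 1..m-1 of Q : e_{i'}
      have hsplit : ∀ j : Fin (m+k), Pmat m k i j * Qmat m k j i' =
          (if (j:ℕ) = k + (i':ℕ) then
            (if (i:ℕ) = (i':ℕ) then (1:ℂ) else 0) else 0) := by
        intro j
        have hj := j.isLt
        simp only [Pmat, Qmat, Matrix.of_apply]
        split_ifs <;> first | (exfalso; omega) | norm_num
      rw [Finset.sum_congr rfl (fun j _ => hsplit j),
        sum_ind (k + (i':ℕ)) (fun _ => if (i:ℕ) = (i':ℕ) then (1:ℂ) else 0)]
      have hii : (i = i') ↔ ((i:ℕ) = (i':ℕ)) := Fin.ext_iff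
      rw [if_congr hii rfl rfl]
      split_ifs <;> first | (exfalso; omega) | norm_num
    · -- columns m.. of Q : binomial coefficients
      push_neg at h1
      by_cases hi : (i:ℕ) < m
      · rw [if_neg (by rw [Fin.ext_iff]; omega)]
        apply Finset.sum_eq_zero
        intro j _
        have hj := j.isLt
        simp only [Pmat, Qmat, Matrix.of_apply]
        split_ifs <;> first | (exfalso; omega) | norm_num
      · push_neg at hi
        have hrk : (i':ℕ) - m < k := by have := i'.isLt; omega
        have hcongr : ∀ j : Fin (m+k), Pmat m k i j * Qmat m k j i' =
            (fun t : ℕ => (if t = 0 then 0 else if t ≤ k then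
              (-1:ℂ)^(t-1+((i:ℕ)-m)) * (Nat.choose (t-1) ((i:ℕ)-m) : ℂ) else
              (if (i:ℕ) = t - k then 1 else 0)) *
              (if 1 ≤ t ∧ t ≤ k then (Nat.choose ((i':ℕ)-m) (t-1) : ℂ) else 0)) (j:ℕ) := by
          intro j
          simp only [Pmat, Qmat, Matrix.of_apply,
            if_neg (show ¬ (i:ℕ) < m by omega), if_neg (show ¬ (i':ℕ) = 0 by omega),
            if_neg (show ¬ (i':ℕ) < m by omega)]
        have key : ∑ j : Fin (m+k),
            (fun t : ℕ => (if t = 0 then 0 else if t ≤ k then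
              (-1:ℂ)^(t-1+((i:ℕ)-m)) * (Nat.choose (t-1) ((i:ℕ)-m) : ℂ) else
              (if (i:ℕ) = t - k then 1 else 0)) *
              (if 1 ≤ t ∧ t ≤ k then (Nat.choose ((i':ℕ)-m) (t-1) : ℂ) else 0)) (j:ℕ)
            = if ((i:ℕ)-m) = ((i':ℕ)-m) then 1 else 0 := by
          rw [Fin.sum_univ_eq_sum_range
            (fun t : ℕ => (if t = 0 then 0 else if t ≤ k then
              (-1:ℂ)^(t-1+((i:ℕ)-m)) * (Nat.choose (t-1) ((i:ℕ)-m) : ℂ) else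
              (if (i:ℕ) = t - k then 1 else 0)) *
              (if 1 ≤ t ∧ t ≤ k then (Nat.choose ((i':ℕ)-m) (t-1) : ℂ) else 0)) (m+k)]
          rw [← Finset.sum_subset (Finset.range_subset_range.2 (by omega : k+1 ≤ m+k))
            (by
              intro t _ ht
              rw [Finset.mem_range, not_lt] at ht
              rw [if_neg (by omega : ¬ (1 ≤ t ∧ t ≤ k)), mul_zero])]
          rw [Finset.sum_range_succ']
          have hterm : ∀ u ∈ Finset.range k,
              ((if u+1 = 0 then (0:ℂ) else if u+1 ≤ k then
                (-1:ℂ)^(u+1-1+((i:ℕ)-m)) * (Nat.choose (u+1-1) ((i:ℕ)-m) : ℂ) else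
                (if (i:ℕ) = u+1-k then 1 else 0)) *
                (if 1 ≤ u+1 ∧ u+1 ≤ k then (Nat.choose ((i':ℕ)-m) (u+1-1) : ℂ) else 0))
              = (-1:ℂ)^(u+((i:ℕ)-m)) * (Nat.choose u ((i:ℕ)-m) : ℂ)
                * (Nat.choose ((i':ℕ)-m) u : ℂ) := by
            intro u hu
            rw [Finset.mem_range] at hu
            rw [if_neg (by omega : ¬ u + 1 = 0), if_pos (by omega : u + 1 ≤ k),
              if_pos (by omega : 1 ≤ u + 1 ∧ u + 1 ≤ k), Nat.add_sub_cancel]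
          rw [Finset.sum_congr rfl hterm, pascal_orth k ((i':ℕ)-m) ((i:ℕ)-m) hrk]
          simp
        rw [Finset.sum_congr rfl (fun j _ => hcongr j), key]
        have hii : (i = i') ↔ (((i:ℕ)-m) = ((i':ℕ)-m)) := by
          rw [Fin.ext_iff]
          constructor <;> intro <;> omega
        rw [if_congr hii.symm rfl rfl]

end BMJF

namespace BMJF

lemma MP_eq_PJ (m k : ℕ) (hk : 1 ≤ k) (hkm : k ≤ m)
    (M : Matrix (Fin (m + k)) (Fin (m + k)) ℂ)
    (hM : ∀ i j : Fin (m + k), M i j =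
      if (i : ℕ) < m then
        (if (j : ℕ) < m then (if i = j then 1 else 0) else 1)
      else
        (if (j : ℕ) < m then 0 else if (i : ℕ) ≤ (j : ℕ) then 1 else 0)) :
    M * Pmat m k = Pmat m k * Jmat m k := by
  have hm1 : 1 ≤ m := le_trans hk hkm
  ext i j
  rw [Matrix.mul_apply, Matrix.mul_apply]
  have hLsplit : ∀ l : Fin (m+k), M i l * Pmat m k l j =
      (if l = i then Pmat m k l j else 0)
      + (if m ≤ (l:ℕ) ∧ (i:ℕ) < (l:ℕ) then (1:ℂ) else 0) * Pmat m k l j := by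
    intro l
    rw [hM i l]
    have hl := l.isLt; have hi := i.isLt
    simp only [Fin.ext_iff]
    split_ifs <;> first | (exfalso; omega) | ring
  have hRsplit : ∀ l : Fin (m+k), Pmat m k i l * Jmat m k l j =
      (if l = j then Pmat m k i l else 0)
      + Pmat m k i l * (if (j:ℕ) = (l:ℕ)+1 ∧ (j:ℕ) ≤ k then (1:ℂ) else 0) := by
    intro l
    simp only [Jmat, Matrix.of_apply, Fin.ext_iff]
    split_ifs <;> first | (exfalso; omega) | ring
  rw [Finset.sum_congr rfl (fun l _ => hLsplit l),
    Finset.sum_congr rfl (fun l _ => hRsplit l),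
    Finset.sum_add_distrib, Finset.sum_add_distrib,
    Finset.sum_ite_eq' Finset.univ i (fun l => Pmat m k l j),
    Finset.sum_ite_eq' Finset.univ j (fun l => Pmat m k i l),
    if_pos (Finset.mem_univ i), if_pos (Finset.mem_univ j)]
  congr 1
  by_cases hj0 : (j:ℕ) = 0
  · rw [Finset.sum_eq_zero, Finset.sum_eq_zero]
    · intro l _
      rw [if_neg (by omega : ¬ ((j:ℕ) = (l:ℕ)+1 ∧ (j:ℕ) ≤ k)), mul_zero]
    · intro l _
      have hl := l.isLt
      simp only [Pmat, Matrix.of_apply]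
      split_ifs <;> first | (exfalso; omega) | norm_num
  · by_cases hjk : (j:ℕ) ≤ k
    · -- the chain columns
      obtain ⟨a, ha⟩ : ∃ a, (j:ℕ) = a + 1 := ⟨(j:ℕ)-1, by omega⟩
      have hak : a < m + k := by have := j.isLt; omega
      have hS2 : ∑ l : Fin (m+k), Pmat m k i l * (if (j:ℕ) = (l:ℕ)+1 ∧ (j:ℕ) ≤ k then (1:ℂ) else 0)
          = Pmat m k i ⟨a, hak⟩ := by
        rw [Finset.sum_eq_single (⟨a, hak⟩ : Fin (m+k))]
        · rw [if_pos ⟨by simpa using ha, hjk⟩, mul_one]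
        · intro b _ hb
          rw [if_neg, mul_zero]
          rintro ⟨h1, _⟩
          exact hb (Fin.ext (show (b:ℕ) = a by omega))
        · intro h; exact absurd (Finset.mem_univ _) h
      rw [hS2]
      have hterm : ∀ l : Fin (m+k), (if m ≤ (l:ℕ) ∧ (i:ℕ) < (l:ℕ) then (1:ℂ) else 0) * Pmat m k l j
          = (fun t : ℕ => (if m ≤ t ∧ (i:ℕ) < t then (1:ℂ) else 0) *
              (if t < m then 0 else (-1:ℂ)^(a+(t-m)) * (Nat.choose a (t-m) : ℂ))) (l:ℕ) := by
        intro l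
        simp only [Pmat, Matrix.of_apply, ha, if_neg (show ¬ (a+1 = 0) by omega),
          if_pos (show a+1 ≤ k by omega), Nat.add_sub_cancel]
      rw [Finset.sum_congr rfl (fun l _ => hterm l),
        Fin.sum_univ_eq_sum_range
          (fun t : ℕ => (if m ≤ t ∧ (i:ℕ) < t then (1:ℂ) else 0) *
            (if t < m then 0 else (-1:ℂ)^(a+(t-m)) * (Nat.choose a (t-m) : ℂ))) (m+k),
        Finset.sum_range_add]
      rw [Finset.sum_eq_zero (fun t ht => by
        rw [Finset.mem_range] at ht
        rw [if_neg (by omega : ¬ (m ≤ t ∧ (i:ℕ) < t)), zero_mul]), zero_add]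
      have h2 : ∀ u ∈ Finset.range k,
          (if m ≤ m+u ∧ (i:ℕ) < m+u then (1:ℂ) else 0) *
            (if m+u < m then 0 else (-1:ℂ)^(a+((m+u)-m)) * (Nat.choose a ((m+u)-m) : ℂ))
          = (if (i:ℕ) < m+u then (1:ℂ) else 0) * ((-1:ℂ)^(a+u) * (Nat.choose a u : ℂ)) := by
        intro u _
        rw [if_neg (by omega : ¬ m+u < m), Nat.add_sub_cancel_left,
          if_congr (show (m ≤ m+u ∧ (i:ℕ) < m+u) ↔ ((i:ℕ) < m+u) by
            constructor
            · exact fun h => h.2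
            · exact fun h => ⟨by omega, h⟩) rfl rfl]
      rw [Finset.sum_congr rfl h2]
      by_cases hi : (i:ℕ) < m
      · -- top rows
        rw [Finset.sum_congr rfl (fun u hu => by
          rw [if_pos (by omega : (i:ℕ) < m+u), one_mul, pow_add, mul_assoc])]
        rw [← Finset.mul_sum]
        match a, ha with
        | 0, ha =>
          rw [row0 k hk, pow_zero, one_mul]
          have : Pmat m k i ⟨0, hak⟩ = 1 := by
            simp [Pmat, hi]
          rw [this]
        | (a'+1), ha =>
          rw [alt_zero a' k (by omega), mul_zero]
          have : Pmat m k i ⟨a'+1, hak⟩ = 0 := by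
            simp [Pmat, hi, show a'+1 ≤ k by omega]
          rw [this]
      · -- bottom rows
        push_neg at hi
        have hsk : (i:ℕ) - m < k := by have := i.isLt; omega
        rw [Finset.sum_congr rfl (fun u hu => by
          rw [if_congr (show ((i:ℕ) < m+u) ↔ ((i:ℕ)-m < u) by omega) rfl rfl])]
        have hsub : ∀ u ∈ Finset.range k,
            (if (i:ℕ)-m < u then (1:ℂ) else 0) * ((-1:ℂ)^(a+u) * (Nat.choose a u : ℂ))
            = (-1:ℂ)^(a+u) * (Nat.choose a u : ℂ)
              - (if u < (i:ℕ)-m+1 then (1:ℂ) else 0) * ((-1:ℂ)^(a+u) * (Nat.choose a u : ℂ)) := by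
          intro u _
          split_ifs <;> first | (exfalso; omega) | ring
        rw [Finset.sum_congr rfl hsub, Finset.sum_sub_distrib]
        have hpart : ∑ u ∈ Finset.range k,
            (if u < (i:ℕ)-m+1 then (1:ℂ) else 0) * ((-1:ℂ)^(a+u) * (Nat.choose a u : ℂ))
            = ∑ u ∈ Finset.range ((i:ℕ)-m+1), (-1:ℂ)^(a+u) * (Nat.choose a u : ℂ) := by
          rw [← Finset.sum_subset (Finset.range_subset_range.2 (by omega : (i:ℕ)-m+1 ≤ k))
            (fun x hx hx' => by
              rw [Finset.mem_range] at hx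
              rw [Finset.mem_range, not_lt] at hx'
              rw [if_neg (by omega), zero_mul])]
          exact Finset.sum_congr rfl (fun u hu => by
            rw [Finset.mem_range] at hu
            rw [if_pos hu, one_mul])
        rw [hpart]
        have hpow : ∀ (n : ℕ) (c : Finset ℕ), ∑ u ∈ c, (-1:ℂ)^(a+u) * (Nat.choose a u : ℂ)
            = (-1:ℂ)^a * ∑ u ∈ c, (-1:ℂ)^u * (Nat.choose a u : ℂ) := by
          intro n c
          rw [Finset.mul_sum]
          exact Finset.sum_congr rfl (fun u _ => by rw [pow_add, mul_assoc])
        rw [hpow 0, hpow 0]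
        match a, ha with
        | 0, ha =>
          rw [row0 k hk, row0 ((i:ℕ)-m+1) (by omega), pow_zero]
          have : Pmat m k i ⟨0, hak⟩ = 0 := by
            simp [Pmat, show ¬ (i:ℕ) < m by omega]
          rw [this]
          ring
        | (a'+1), ha =>
          rw [alt_zero a' k (by omega), alt_partial a' ((i:ℕ)-m)]
          have : Pmat m k i ⟨a'+1, hak⟩
              = (-1:ℂ)^(a'+((i:ℕ)-m)) * (Nat.choose a' ((i:ℕ)-m) : ℂ) := by
            simp [Pmat, show ¬ (i:ℕ) < m by omega, show a'+1 ≤ k by omega]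
          rw [this, pow_succ, pow_add]
          ring
    · -- columns beyond k
      rw [Finset.sum_eq_zero, Finset.sum_eq_zero]
      · intro l _
        rw [if_neg (by omega : ¬ ((j:ℕ) = (l:ℕ)+1 ∧ (j:ℕ) ≤ k)), mul_zero]
      · intro l _
        have hl := l.isLt; have hjlt := j.isLt
        simp only [Pmat, Matrix.of_apply]
        split_ifs <;> first | (exfalso; omega) | norm_num

end BMJF

namespace BMJF

def Emat (m k : ℕ) : Matrix (Fin (m+k)) (Fin (m+k)) ℂ :=
  Matrix.of (fun i j => if (j:ℕ) = (i:ℕ)+1 ∧ (j:ℕ) ≤ k then (1:ℂ) else 0)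

def E2mat (m k : ℕ) : Matrix (Fin (m+k)) (Fin (m+k)) ℂ :=
  Matrix.of (fun i j => if (j:ℕ) = (i:ℕ)+2 ∧ (j:ℕ) ≤ k then (1:ℂ) else 0)

def shiftMat (m k s : ℕ) : Matrix (Fin (m+k)) (Fin (m+k)) ℂ :=
  Matrix.of (fun i j => if (j:ℕ) = (i:ℕ)+s ∧ (j:ℕ) ≤ k then (1:ℂ) else 0)

def selL (m k d : ℕ) : Matrix (Fin d) (Fin (m+k)) ℂ :=
  Matrix.of fun t i => if (i:ℕ) = (t:ℕ) then (1:ℂ) else 0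

def selA (m k d : ℕ) : Matrix (Fin (m+k)) (Fin d) ℂ :=
  Matrix.of fun i t => if (i:ℕ) = (t:ℕ) then (1:ℂ) else 0

def selR (m k d s : ℕ) : Matrix (Fin (m+k)) (Fin d) ℂ :=
  Matrix.of fun j u => if (j:ℕ) = (u:ℕ)+s then (1:ℂ) else 0

def selB (m k d s : ℕ) : Matrix (Fin d) (Fin (m+k)) ℂ :=
  Matrix.of fun t j => if (j:ℕ) = (t:ℕ)+s then (1:ℂ) else 0

lemma J_sub_one (m k : ℕ) : Jmat m k - 1 = shiftMat m k 1 := by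
  ext i j
  simp only [Jmat, shiftMat, Matrix.sub_apply, Matrix.one_apply, Matrix.of_apply, Fin.ext_iff]
  split_ifs <;> first | (exfalso; omega) | norm_num

lemma E_sq (m k : ℕ) : shiftMat m k 1 * shiftMat m k 1 = shiftMat m k 2 := by
  ext i j
  rw [Matrix.mul_apply]
  simp only [shiftMat, Matrix.of_apply]
  have hsplit : ∀ l : Fin (m+k),
      (if (l:ℕ) = (i:ℕ)+1 ∧ (l:ℕ) ≤ k then (1:ℂ) else 0) *
        (if (j:ℕ) = (l:ℕ)+1 ∧ (j:ℕ) ≤ k then (1:ℂ) else 0)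
      = (if (l:ℕ) = (i:ℕ)+1 then (if (j:ℕ) = (i:ℕ)+2 ∧ (j:ℕ) ≤ k then (1:ℂ) else 0) else 0) := by
    intro l
    split_ifs <;> first | (exfalso; omega) | norm_num
  rw [Finset.sum_congr rfl (fun l _ => hsplit l),
    sum_ind ((i:ℕ)+1) (fun _ => if (j:ℕ) = (i:ℕ)+2 ∧ (j:ℕ) ≤ k then (1:ℂ) else 0)]
  have hj := j.isLt
  split_ifs <;> first | (exfalso; omega) | norm_num

lemma rank_shift (m k s : ℕ) (hk : 1 ≤ k) (hkm : k ≤ m) (hs : 1 ≤ s) :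
    (shiftMat m k s).rank = k + 1 - s := by
  have hm1 : 1 ≤ m := le_trans hk hkm
  set d : ℕ := k + 1 - s with hd
  have hfac : shiftMat m k s = selA m k d * selB m k d s := by
    ext i j
    rw [Matrix.mul_apply]
    simp only [shiftMat, selA, selB, Matrix.of_apply]
    have hsplit : ∀ t : Fin d,
        (if (i:ℕ) = (t:ℕ) then (1:ℂ) else 0) * (if (j:ℕ) = (t:ℕ)+s then (1:ℂ) else 0)
        = (if (t:ℕ) = (i:ℕ) then (if (j:ℕ) = (i:ℕ)+s then (1:ℂ) else 0) else 0) := by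
      intro t
      split_ifs <;> first | (exfalso; omega) | norm_num
    rw [Finset.sum_congr rfl (fun t _ => hsplit t),
      sum_ind (n := d) ((i:ℕ)) (fun _ => if (j:ℕ) = (i:ℕ)+s then (1:ℂ) else 0)]
    have hj := j.isLt
    split_ifs <;> first | (exfalso; omega) | norm_num
  have hub : (shiftMat m k s).rank ≤ d := by
    rw [hfac]
    refine le_trans (Matrix.rank_mul_le_left _ _)
      (le_trans (Matrix.rank_le_card_width _) ?_)
    simp
  have hET : shiftMat m k s * selR m k d s = selA m k d := by
    ext i u
    rw [Matrix.mul_apply]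
    simp only [shiftMat, selR, selA, Matrix.of_apply]
    have hu : (u:ℕ) < d := u.isLt
    have hsplit : ∀ l : Fin (m+k),
        (if (l:ℕ) = (i:ℕ)+s ∧ (l:ℕ) ≤ k then (1:ℂ) else 0) *
          (if (l:ℕ) = (u:ℕ)+s then (1:ℂ) else 0)
        = (if (l:ℕ) = (u:ℕ)+s then (if (i:ℕ) = (u:ℕ) then (1:ℂ) else 0) else 0) := by
      intro l
      split_ifs <;> first | (exfalso; omega) | norm_num
    rw [Finset.sum_congr rfl (fun l _ => hsplit l),
      sum_ind ((u:ℕ)+s) (fun _ => if (i:ℕ) = (u:ℕ) then (1:ℂ) else 0)]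
    rw [if_pos (by omega : (u:ℕ)+s < m+k)]
  have hSA : selL m k d * selA m k d = 1 := by
    ext t t'
    rw [Matrix.mul_apply, Matrix.one_apply]
    simp only [selL, selA, Matrix.of_apply]
    have ht : (t:ℕ) < d := t.isLt
    have hsplit : ∀ i : Fin (m+k),
        (if (i:ℕ) = (t:ℕ) then (1:ℂ) else 0) * (if (i:ℕ) = (t':ℕ) then (1:ℂ) else 0)
        = (if (i:ℕ) = (t:ℕ) then (if (t:ℕ) = (t':ℕ) then (1:ℂ) else 0) else 0) := by
      intro i
      split_ifs <;> first | (exfalso; omega) | norm_num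
    rw [Finset.sum_congr rfl (fun i _ => hsplit i),
      sum_ind ((t:ℕ)) (fun _ => if (t:ℕ) = (t':ℕ) then (1:ℂ) else 0)]
    rw [if_pos (by omega : (t:ℕ) < m+k), if_congr (Fin.ext_iff.symm) rfl rfl]
  have hlb : d ≤ (shiftMat m k s).rank := by
    have h1 : (selL m k d * (shiftMat m k s * selR m k d s)).rank = d := by
      rw [hET, hSA, Matrix.rank_one, Fintype.card_fin]
    calc d = (selL m k d * (shiftMat m k s * selR m k d s)).rank := h1.symm
    _ ≤ (shiftMat m k s * selR m k d s).rank := Matrix.rank_mul_le_right _ _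
    _ ≤ (shiftMat m k s).rank := Matrix.rank_mul_le_left _ _
  omega

end BMJF

/-- Let `M` be the `(m+k)×(m+k)` block matrix `[[I_m, D],[0, C]]` where `D` is
the `m×k` all-ones matrix and `C` is the `k×k` upper-triangular matrix with 1's
on and above the diagonal (`1 ≤ k ≤ m`). Then all eigenvalues of `M` equal 1
(its characteristic polynomial is `(X − 1)^{m+k}`), `rank(M − I) = k`,
`rank((M − I)²) = k − 1`, and the Jordan normal form of `M` consists of one
Jordan block of size `k+1` (eigenvalue 1) and `m−1` blocks of size 1. -/
theorem block_matrix_jordan_form (m k : ℕ) (hk : 1 ≤ k) (hkm : k ≤ m)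
    (M : Matrix (Fin (m + k)) (Fin (m + k)) ℂ)
    (hM : ∀ i j : Fin (m + k), M i j =
      if (i : ℕ) < m then
        (if (j : ℕ) < m then (if i = j then 1 else 0) else 1)
      else
        (if (j : ℕ) < m then 0 else if (i : ℕ) ≤ (j : ℕ) then 1 else 0)) :
    M.charpoly = (X - C 1) ^ (m + k) ∧
    (M - 1).rank = k ∧
    ((M - 1) ^ 2).rank = k - 1 ∧
    ∃ P : Matrix (Fin (m + k)) (Fin (m + k)) ℂ, IsUnit P.det ∧
      M * P = P * Matrix.of (fun i j : Fin (m + k) =>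
        if i = j then 1
        else if (j : ℕ) = (i : ℕ) + 1 ∧ (j : ℕ) ≤ k then 1 else (0 : ℂ)) := by
  have hm1 : 1 ≤ m := le_trans hk hkm
  -- notation
  set P := BMJF.Pmat m k with hP
  set Q := BMJF.Qmat m k with hQ
  set J := BMJF.Jmat m k with hJ
  have hPQ : P * Q = 1 := BMJF.PQ_eq_one m k hk hkm
  have hQP : Q * P = 1 := mul_eq_one_comm.mp hPQ
  have hPdet : IsUnit P.det := Matrix.isUnit_det_of_right_inverse hPQ
  have hQdet : IsUnit Q.det := Matrix.isUnit_det_of_right_inverse hQP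
  have hMP : M * P = P * J := BMJF.MP_eq_PJ m k hk hkm M hM
  have hMeq : M = P * J * Q := by
    calc M = M * (P * Q) := by rw [hPQ, mul_one]
    _ = (M * P) * Q := (mul_assoc M P Q).symm
    _ = P * J * Q := by rw [hMP]
  have hsub : M - 1 = P * BMJF.shiftMat m k 1 * Q := by
    have h1 : P * (J - 1) * Q = P * J * Q - 1 := by
      rw [Matrix.mul_sub, Matrix.mul_one, Matrix.sub_mul, hPQ]
    rw [← BMJF.J_sub_one m k, h1, hMeq]
  refine ⟨?_, ?_, ?_, ?_⟩
  · -- characteristic polynomial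
    have htri : M.BlockTriangular id := by
      intro i j hij
      have hij' : (j:ℕ) < (i:ℕ) := hij
      rw [hM]
      split_ifs with h1 h2 h3 <;>
        first | rfl | (exfalso; omega) |
          (exfalso; exact absurd (Fin.ext_iff.mp (by assumption)) (by omega))
    rw [Matrix.charpoly_of_upperTriangular M htri]
    have hdiag : ∀ i : Fin (m+k), M i i = 1 := by
      intro i
      rw [hM]
      split_ifs <;> first | rfl | (exfalso; omega) |
        (exfalso; exact absurd rfl (by assumption))
    calc ∏ i : Fin (m+k), (X - C (M i i)) = ∏ _i : Fin (m+k), (X - C 1) :=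
          Finset.prod_congr rfl (fun i _ => by rw [hdiag i])
    _ = (X - C 1) ^ (m + k) := by
        rw [Finset.prod_const, Finset.card_univ, Fintype.card_fin]
  · -- rank of M - 1
    rw [hsub, mul_assoc,
      Matrix.rank_mul_eq_right_of_isUnit_det P _ hPdet,
      Matrix.rank_mul_eq_left_of_isUnit_det Q _ hQdet]
    have := BMJF.rank_shift m k 1 hk hkm le_rfl
    omega
  · -- rank of (M - 1)^2
    have hsq : (M - 1)^2 = P * BMJF.shiftMat m k 2 * Q := by
      rw [pow_two, hsub, ← BMJF.E_sq m k]
      simp only [Matrix.mul_assoc]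
      rw [← Matrix.mul_assoc Q P, hQP, Matrix.one_mul]
    rw [hsq, mul_assoc,
      Matrix.rank_mul_eq_right_of_isUnit_det P _ hPdet,
      Matrix.rank_mul_eq_left_of_isUnit_det Q _ hQdet]
    have := BMJF.rank_shift m k 2 hk hkm (by omega)
    omega
  · exact ⟨P, hPdet, hMP⟩
end
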